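/- The theory E₁ ∪ (Assigned Validity) is upgeneric, where E₁ consists of all universal closures of Kφ for valid L_EA-formulas φ, and Assigned Validity consists of all sentences φ^s where φ is a valid L_EA-formula and s is an assignment into ℕ. -/

import Mathlib

/-!
A stratifier sends `Kφ` to `K^α φ⁺` with `α` the least element of `X` not yet used in `φ⁺`, so every
superscript occurring in `φ⁺` lies below `α`.

Assigned Validity: reading `𝓜 = 𝓜_{T^⊕}` through a stratifier gives an `L_EA`-structure `𝓜⁺`
(`𝓜⁺ ⊨ Kφ[s]` iff `𝓜 ⊨ (Kφ)⁺[s]`). If `φ` is valid it holds in `𝓜⁺`, i.e. `𝓜 ⊨ φ⁺[s]`, and since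
`𝓜` has the standard first-order part this says `𝓜 ⊨ (φ^s)⁺ = (φ⁺)^s`.

`E₁`: `𝓜 ⊨ K^α φ⁺[s]` means `T^⊕ ∩ α ⊨ (φ⁺)^s`, and `(φ⁺)^s = (φ^s)⁺` is itself a member of
`T^⊕ ∩ α`, because `φ^s ∈ Assigned Validity ⊆ T` and all superscripts of `φ⁺` lie below `α`.

The real work is checking that `𝓜⁺` satisfies the three axioms of the base logic. Invariance under
renaming of bound variables needs that satisfaction in an arbitrary structure is invariant under
alphabetic variants; under an operator this is reduced, one matched pair of bound variables at a
time, to the substitution axiom by renaming the pair to a common fresh variable.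
-/

namespace FCT

/-- Terms of the language `L_PA = (0, S, +, ·)`.  Variables are indexed by `ℕ`. -/
inductive Term : Type where
  | var : ℕ → Term
  | zero : Term
  | succ : Term → Term
  | add : Term → Term → Term
  | mul : Term → Term → Term

/-- Formulas of `L_PA` extended by a family of unary operators indexed by `Op`
(the base logic).  `op K φ` is the formula `Kφ`. -/
inductive Formula (Op : Type) : Type where
  | eq : Term → Term → Formula Op
  | imp : Formula Op → Formula Op → Formula Op
  | not : Formula Op → Formula Op
  | all : ℕ → Formula Op → Formula Op
  | op : Op → Formula Op → Formula Op

/-- The ordinals below `ω·ω`, encoded as pairs: `(a, b)` represents `ω·a + b`,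
with the lexicographic order. -/
abbrev Ord2 : Type := ℕ ×ₗ ℕ

/-- The ordinal `ω·a + b` as an element of `Ord2`. -/
def omul (a b : ℕ) : Ord2 := toLex (a, b)

/-- Formulas of `L_EA`: one operator `K`. -/
abbrev LEA : Type := Formula Unit

/-- Formulas of `L_{ω·ω}`: operators `K^α` for `α < ω·ω`. -/
abbrev LOO : Type := Formula Ord2

/-- `Kφ` in `L_EA`. -/
def KK (φ : LEA) : LEA := .op () φ

/-- Variables occurring in a term. -/
def Term.vars : Term → Set ℕ
  | .var x => {x}
  | .zero => ∅
  | .succ t => t.vars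
  | .add t u => t.vars ∪ u.vars
  | .mul t u => t.vars ∪ u.vars

/-- Free variables of a formula (`FV(Kφ) = FV(φ)`). -/
def Formula.free {Op : Type} : Formula Op → Set ℕ
  | .eq t u => t.vars ∪ u.vars
  | .imp φ ψ => φ.free ∪ ψ.free
  | .not φ => φ.free
  | .all x φ => φ.free \ {x}
  | .op _ φ => φ.free

/-- A sentence is a formula with no free variables. -/
def Formula.IsSentence {Op : Type} (φ : Formula Op) : Prop := φ.free = ∅

/-- A theory is a set of sentences. -/
def IsTheory {Op : Type} (T : Set (Formula Op)) : Prop := ∀ φ ∈ T, φ.IsSentence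

/-- Substitution of the term `u` for the variable `x` in a term. -/
def Term.subst (x : ℕ) (u : Term) : Term → Term
  | .var y => if y = x then u else .var y
  | .zero => .zero
  | .succ t => .succ (Term.subst x u t)
  | .add t₁ t₂ => .add (Term.subst x u t₁) (Term.subst x u t₂)
  | .mul t₁ t₂ => .mul (Term.subst x u t₁) (Term.subst x u t₂)

/-- Substitution `φ(x|u)` of the term `u` for all free occurrences of `x` in `φ`. -/
def Formula.subst {Op : Type} (x : ℕ) (u : Term) : Formula Op → Formula Op
  | .eq t₁ t₂ => .eq (Term.subst x u t₁) (Term.subst x u t₂)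
  | .imp φ ψ => .imp (Formula.subst x u φ) (Formula.subst x u ψ)
  | .not φ => .not (Formula.subst x u φ)
  | .all y φ => if y = x then .all y φ else .all y (Formula.subst x u φ)
  | .op K φ => .op K (Formula.subst x u φ)

/-- The term `u` is substitutable for the variable `x` in the formula. -/
def Formula.Substitutable {Op : Type} (x : ℕ) (u : Term) : Formula Op → Prop
  | .eq _ _ => True
  | .imp φ ψ => φ.Substitutable x u ∧ ψ.Substitutable x u
  | .not φ => φ.Substitutable x u
  | .all y φ => x = y ∨ x ∉ φ.free ∨ (y ∉ u.vars ∧ φ.Substitutable x u)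
  | .op _ φ => φ.Substitutable x u

/-- Matching of two variables relative to a list of pairs of renamed bound variables. -/
def varMatch : List (ℕ × ℕ) → ℕ → ℕ → Prop
  | [], x, y => x = y
  | (a, b) :: ρ, x, y => (x = a ∧ y = b) ∨ (x ≠ a ∧ y ≠ b ∧ varMatch ρ x y)

/-- Alphabetic matching of terms relative to a list of pairs of renamed bound variables. -/
def Term.alpha (ρ : List (ℕ × ℕ)) : Term → Term → Prop
  | .var x, .var y => varMatch ρ x y
  | .zero, .zero => True
  | .succ t, .succ u => t.alpha ρ u
  | .add t₁ t₂, .add u₁ u₂ => t₁.alpha ρ u₁ ∧ t₂.alpha ρ u₂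
  | .mul t₁ t₂, .mul u₁ u₂ => t₁.alpha ρ u₁ ∧ t₂.alpha ρ u₂
  | _, _ => False

/-- Alphabetic matching of formulas relative to a list of pairs of renamed bound variables. -/
def Formula.alpha {Op : Type} (ρ : List (ℕ × ℕ)) : Formula Op → Formula Op → Prop
  | .eq t₁ t₂, .eq u₁ u₂ => t₁.alpha ρ u₁ ∧ t₂.alpha ρ u₂
  | .imp φ₁ φ₂, .imp ψ₁ ψ₂ => φ₁.alpha ρ ψ₁ ∧ φ₂.alpha ρ ψ₂
  | .not φ, .not ψ => φ.alpha ρ ψ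
  | .all x φ, .all y ψ => φ.alpha ((x, y) :: ρ) ψ
  | .op K φ, .op K' ψ => K = K' ∧ φ.alpha ρ ψ
  | _, _ => False

/-- `ψ` is an alphabetic variant of `φ`: it is obtained from `φ` by renaming
bound variables while respecting the binding of the quantifiers. -/
def Formula.AlphaVariant {Op : Type} (φ ψ : Formula Op) : Prop := φ.alpha [] ψ

/-- The data of a structure for the base logic over `L_PA` extended by the
operators `Op`: a first-order part together with a truth valuation
`opSat K φ s` ("`M ⊨ Kφ[s]`") for operator-prefixed formulas. -/
structure PreStruc (Op : Type) : Type 1 where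
  U : Type
  zero : U
  succ : U → U
  add : U → U → U
  mul : U → U → U
  opSat : Op → Formula Op → (ℕ → U) → Prop

/-- Evaluation of terms. -/
def Term.eval {Op : Type} (M : PreStruc Op) (s : ℕ → M.U) : Term → M.U
  | .var x => s x
  | .zero => M.zero
  | .succ t => M.succ (t.eval M s)
  | .add t u => M.add (t.eval M s) (u.eval M s)
  | .mul t u => M.mul (t.eval M s) (u.eval M s)

/-- Satisfaction `M ⊨ φ[s]`: as in first-order logic on non-operator formulas,
and given by `opSat` on operator-prefixed formulas. -/
def Sat {Op : Type} (M : PreStruc Op) : Formula Op → (ℕ → M.U) → Prop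
  | .eq t u, s => t.eval M s = u.eval M s
  | .imp φ ψ, s => Sat M φ s → Sat M ψ s
  | .not φ, s => ¬ Sat M φ s
  | .all x φ, s => ∀ a : M.U, Sat M φ (Function.update s x a)
  | .op K φ, s => M.opSat K φ s

/-- `M` is a genuine structure of the base logic: its operator valuation
(1) depends only on the values of the assignment on the free variables,
(2) is invariant under renaming of bound variables, and
(3) satisfies weak substitution. -/
def IsStruc {Op : Type} (M : PreStruc Op) : Prop :=
  (∀ (K : Op) (φ : Formula Op) (s t : ℕ → M.U),
      (∀ x ∈ φ.free, s x = t x) → (M.opSat K φ s ↔ M.opSat K φ t)) ∧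
  (∀ (K : Op) (φ ψ : Formula Op) (s : ℕ → M.U),
      φ.AlphaVariant ψ → (M.opSat K φ s ↔ M.opSat K ψ s)) ∧
  (∀ (K : Op) (φ : Formula Op) (x y : ℕ) (s : ℕ → M.U),
      φ.Substitutable x (.var y) →
      (M.opSat K (φ.subst x (.var y)) s ↔ M.opSat K φ (Function.update s x (s y))))

/-- A formula is valid if it holds in every structure under every assignment. -/
def Valid {Op : Type} (φ : Formula Op) : Prop :=
  ∀ M : PreStruc Op, IsStruc M → ∀ s : ℕ → M.U, Sat M φ s

/-- `T ⊨ φ`: every structure satisfying all members of `T` (under every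
assignment) satisfies `φ` under every assignment. -/
def Models {Op : Type} (T : Set (Formula Op)) (φ : Formula Op) : Prop :=
  ∀ M : PreStruc Op, IsStruc M → (∀ ψ ∈ T, ∀ s : ℕ → M.U, Sat M ψ s) →
    ∀ s : ℕ → M.U, Sat M φ s

/-- `M ⊨ T`. -/
def SatTheory {Op : Type} (M : PreStruc Op) (T : Set (Formula Op)) : Prop :=
  ∀ φ ∈ T, ∀ s : ℕ → M.U, Sat M φ s

/-- The numeral `n̄`. -/
def numeral : ℕ → Term
  | 0 => .zero
  | n + 1 => .succ (numeral n)

/-- Helper for `φ^s`: replace every free occurrence of a variable `x` not in the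
list `B` of bound variables by the numeral for `s x`. -/
def Term.numSub (s : ℕ → ℕ) (B : List ℕ) : Term → Term
  | .var x => if x ∈ B then .var x else numeral (s x)
  | .zero => .zero
  | .succ t => .succ (t.numSub s B)
  | .add t u => .add (t.numSub s B) (u.numSub s B)
  | .mul t u => .mul (t.numSub s B) (u.numSub s B)

/-- Helper for `φ^s` (carrying the list of bound variables). -/
def Formula.numSub {Op : Type} (s : ℕ → ℕ) : List ℕ → Formula Op → Formula Op
  | B, .eq t u => .eq (t.numSub s B) (u.numSub s B)
  | B, .imp φ ψ => .imp (φ.numSub s B) (ψ.numSub s B)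
  | B, .not φ => .not (φ.numSub s B)
  | B, .all x φ => .all x (φ.numSub s (x :: B))
  | B, .op K φ => .op K (φ.numSub s B)

/-- `φ^s`: the sentence obtained by substituting the numeral for `s x` for each
free occurrence of each variable `x` in `φ`. -/
def assignSub {Op : Type} (s : ℕ → ℕ) (φ : Formula Op) : Formula Op :=
  φ.numSub s []

/-- The intended structure `𝒩_T` of an `L_EA`-theory `T`: standard first-order
part and `𝒩_T ⊨ Kφ[s]` iff `T ⊨ φ^s`. -/
def NStruc (T : Set LEA) : PreStruc Unit where
  U := ℕ
  zero := 0
  succ := Nat.succ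
  add := (· + ·)
  mul := (· * ·)
  opSat := fun _ φ s => Models T (assignSub s φ)

/-- `T` is true: `𝒩_T ⊨ T`. -/
def TheoryTrue (T : Set LEA) : Prop := SatTheory (NStruc T) T

/-- `On(φ)`: the set of `α < ω·ω` such that `K^α` occurs in `φ`. -/
def Formula.On : LOO → Set Ord2
  | .eq _ _ => ∅
  | .imp φ ψ => φ.On ∪ ψ.On
  | .not φ => φ.On
  | .all _ φ => φ.On
  | .op α φ => insert α φ.On

/-- `T ∩ α`: the members of `T` all of whose superscripts are `< α`. -/
def cut (T : Set LOO) (α : Ord2) : Set LOO := {φ | φ ∈ T ∧ ∀ β ∈ φ.On, β < α}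

/-- The intended structure `𝓜_T` of an `L_{ω·ω}`-theory `T`: standard
first-order part and `𝓜_T ⊨ K^αφ[s]` iff `T∩α ⊨ φ^s`. -/
def MStruc (T : Set LOO) : PreStruc Ord2 where
  U := ℕ
  zero := 0
  succ := Nat.succ
  add := (· + ·)
  mul := (· * ·)
  opSat := fun α φ s => Models (cut T α) (assignSub s φ)

/-- The least element of a set `A ⊆ ω·ω` (junk value if `A` is empty):
first minimize the `ω`-coefficient, then the finite part. -/
noncomputable def leastIn (A : Set Ord2) : Ord2 :=
  let a := sInf {a : ℕ | ∃ b : ℕ, toLex (a, b) ∈ A}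
  toLex (a, sInf {b : ℕ | toLex (a, b) ∈ A})

/-- The stratifier given by `X ⊆ ω·ω`: fixes atomic formulas, commutes with
`→`, `¬`, `∀`, and sends `Kφ₀` to `K^α φ₀⁺` where `α` is the least element of
`X \ On(φ₀⁺)`. -/
noncomputable def stratify (X : Set Ord2) : LEA → LOO
  | .eq t u => .eq t u
  | .imp φ ψ => .imp (stratify X φ) (stratify X ψ)
  | .not φ => .not (stratify X φ)
  | .all x φ => .all x (stratify X φ)
  | .op _ φ => .op (leastIn (X \ (stratify X φ).On)) (stratify X φ)

/-- A stratifier is the map given by some infinite `X ⊆ ω·ω`. -/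
def IsStratifier (f : LEA → LOO) : Prop :=
  ∃ X : Set Ord2, X.Infinite ∧ f = stratify X

/-- `T^⊕ = { φ⁺ : φ ∈ T, ⁺ a stratifier }`. -/
def oplus (T : Set LEA) : Set LOO :=
  {ψ | ∃ φ ∈ T, ∃ f : LEA → LOO, IsStratifier f ∧ ψ = f φ}

/-- The veristratifier: the stratifier given by `X = {ω·1, ω·2, ω·3, …}`. -/
noncomputable def veristratifier : LEA → LOO :=
  stratify {α : Ord2 | ∃ n : ℕ, α = omul (n + 1) 0}

/-- `φ⁻`: change every `K^α` into `K`. -/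
def Formula.down : LOO → LEA
  | .eq t u => .eq t u
  | .imp φ ψ => .imp φ.down ψ.down
  | .not φ => .not φ.down
  | .all x φ => .all x φ.down
  | .op _ φ => .op () φ.down

/-- `M⁺` for an `L_{ω·ω}`-structure `M` and a stratifier `⁺`: same universe and
`L_PA`-part, and `M⁺ ⊨ Kφ[s]` iff `M ⊨ (Kφ)⁺[s]`. -/
def upStruc (M : PreStruc Ord2) (f : LEA → LOO) : PreStruc Unit where
  U := M.U
  zero := M.zero
  succ := M.succ
  add := M.add
  mul := M.mul
  opSat := fun _ φ s => Sat M (f (.op () φ)) s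

/-- `M⁻` for an `L_EA`-structure `M`: same universe and `L_PA`-part, and
`M⁻ ⊨ K^αφ[s]` iff `M ⊨ K(φ⁻)[s]`. -/
def downStruc (M : PreStruc Unit) : PreStruc Ord2 where
  U := M.U
  zero := M.zero
  succ := M.succ
  add := M.add
  mul := M.mul
  opSat := fun _ φ s => Sat M (.op () φ.down) s

open Classical in
/-- `h(φ)`: replace every occurrence of `K^α` with `α ∈ X` by `K^{h(α)}`. -/
noncomputable def mapOps (X : Set Ord2) (h : Ord2 → Ord2) : LOO → LOO
  | .eq t u => .eq t u
  | .imp φ ψ => .imp (mapOps X h φ) (mapOps X h ψ)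
  | .not φ => .not (mapOps X h φ)
  | .all x φ => .all x (mapOps X h φ)
  | .op α φ => .op (if α ∈ X then h α else α) (mapOps X h φ)

/-- `h : X → ω·ω` is order preserving. -/
def OrdPresOn (X : Set Ord2) (h : Ord2 → Ord2) : Prop :=
  ∀ a ∈ X, ∀ b ∈ X, a < b → h a < h b

/-- A uniform `L_{ω·ω}`-theory. -/
def Uniform (T : Set LOO) : Prop :=
  ∀ (X : Set Ord2) (h : Ord2 → Ord2), OrdPresOn X h →
    ∀ φ ∈ T, φ.On ⊆ X → mapOps X h φ ∈ T

/-- `h(M)`: same universe and `L_PA`-part as `M`, and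
`h(M) ⊨ K^αφ[s]` iff `M ⊨ h(K^αφ)[s]`. -/
noncomputable def hStruc (X : Set Ord2) (h : Ord2 → Ord2) (M : PreStruc Ord2) :
    PreStruc Ord2 where
  U := M.U
  zero := M.zero
  succ := M.succ
  add := M.add
  mul := M.mul
  opSat := fun α φ s => Sat M (mapOps X h (.op α φ)) s

/-- The depth of nesting of the operators. -/
def Formula.depth {Op : Type} : Formula Op → ℕ
  | .eq _ _ => 0
  | .imp φ ψ => max φ.depth ψ.depth
  | .not φ => φ.depth
  | .all _ φ => φ.depth
  | .op _ φ => φ.depth + 1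

/-- `∀x₁ ⋯ ∀xₙ φ`. -/
def Formula.alls {Op : Type} : List ℕ → Formula Op → Formula Op
  | [], φ => φ
  | x :: l, φ => .all x (Formula.alls l φ)

/-- `ψ` is a universal closure of `φ`: a sentence of the form `∀x₁ ⋯ ∀xₙ φ`. -/
def IsUClosure {Op : Type} (φ ψ : Formula Op) : Prop :=
  ψ.IsSentence ∧ ∃ l : List ℕ, ψ = Formula.alls l φ

/-- The schema `E₁`: universal closures of `Kφ`, `φ` valid. -/
def E1 : Set LEA := {χ | ∃ φ : LEA, Valid φ ∧ IsUClosure (KK φ) χ}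

/-- The schema `E₂`: universal closures of `K(φ→ψ) → Kφ → Kψ`. -/
def E2 : Set LEA :=
  {χ | ∃ φ ψ : LEA, IsUClosure (.imp (KK (.imp φ ψ)) (.imp (KK φ) (KK ψ))) χ}

/-- The schema `E′₂`: universal closures of `K(φ→ψ) → Kφ → Kψ` with
`depth(φ) ≤ depth(ψ)`. -/
def E2' : Set LEA :=
  {χ | ∃ φ ψ : LEA, φ.depth ≤ ψ.depth ∧
    IsUClosure (.imp (KK (.imp φ ψ)) (.imp (KK φ) (KK ψ))) χ}

/-- The schema `E₃`: universal closures of `Kφ → φ`. -/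
def E3 : Set LEA := {χ | ∃ φ : LEA, IsUClosure (.imp (KK φ) φ) χ}

/-- The Assigned Validity schema: all `φ^s` with `φ` valid, `s : ℕ → ℕ`. -/
def AssignedValidity : Set LEA :=
  {χ | ∃ (φ : LEA) (s : ℕ → ℕ), Valid φ ∧ χ = assignSub s φ}

/-- `K(T₀) = { Kφ : φ ∈ T₀ }`. -/
def KSet (T : Set LEA) : Set LEA := {χ | ∃ φ ∈ T, χ = KK φ}

/-- Membership in the smallest `K`-closed set containing `S`. -/
inductive KClosureMem (S : Set LEA) : LEA → Prop
  | base {φ : LEA} : φ ∈ S → KClosureMem S φ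
  | k {φ : LEA} : KClosureMem S φ → KClosureMem S (KK φ)

/-- The smallest `K`-closed theory containing `S`. -/
def KClosure (S : Set LEA) : Set LEA := {φ | KClosureMem S φ}

/-- `T₀` is upgeneric: `𝓜_{T^⊕} ⊨ T₀^⊕` for every `L_EA`-theory `T ⊇ T₀`. -/
def Upgeneric (T₀ : Set LEA) : Prop :=
  ∀ T : Set LEA, IsTheory T → T₀ ⊆ T → SatTheory (MStruc (oplus T)) (oplus T₀)

/-- A concrete Gödel numbering of terms. -/
def encodeTerm : Term → ℕ
  | .var x => Nat.pair 0 x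
  | .zero => Nat.pair 1 0
  | .succ t => Nat.pair 2 (encodeTerm t)
  | .add t u => Nat.pair 3 (Nat.pair (encodeTerm t) (encodeTerm u))
  | .mul t u => Nat.pair 4 (Nat.pair (encodeTerm t) (encodeTerm u))

/-- A concrete Gödel numbering of `L_EA`-formulas. -/
def encodeLEA : LEA → ℕ
  | .eq t u => Nat.pair 0 (Nat.pair (encodeTerm t) (encodeTerm u))
  | .imp φ ψ => Nat.pair 1 (Nat.pair (encodeLEA φ) (encodeLEA ψ))
  | .not φ => Nat.pair 2 (encodeLEA φ)
  | .all x φ => Nat.pair 3 (Nat.pair x (encodeLEA φ))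
  | .op _ φ => Nat.pair 4 (encodeLEA φ)

/-- `T` is recursively enumerable: the set of Gödel numbers of its members is r.e. -/
def RETheory (T : Set LEA) : Prop := REPred fun n => ∃ φ ∈ T, encodeLEA φ = n

/-- `T₀` is r.e.-upgeneric: `T₀` is r.e. and `𝓜_{T^⊕} ⊨ T₀^⊕` for every r.e.
`L_EA`-theory `T ⊇ T₀`. -/
def REUpgeneric (T₀ : Set LEA) : Prop :=
  RETheory T₀ ∧
    ∀ T : Set LEA, IsTheory T → RETheory T → T₀ ⊆ T →
      SatTheory (MStruc (oplus T)) (oplus T₀)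

def Term.varFinset : Term → Finset ℕ
  | .var x => {x}
  | .zero => ∅
  | .succ t => t.varFinset
  | .add t u => t.varFinset ∪ u.varFinset
  | .mul t u => t.varFinset ∪ u.varFinset

theorem Term.mem_varFinset {x : ℕ} (t : Term) : x ∈ t.varFinset ↔ x ∈ t.vars := by
  induction t <;> simp_all [varFinset, vars]

def Formula.allVars {Op : Type} : Formula Op → Finset ℕ
  | .eq t u => t.varFinset ∪ u.varFinset
  | .imp φ ψ => φ.allVars ∪ ψ.allVars
  | .not φ => φ.allVars
  | .all x φ => insert x φ.allVars
  | .op _ φ => φ.allVars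

theorem Formula.notMem_free_of_notMem_allVars {Op : Type} {x : ℕ} {φ : Formula Op}
    (h : x ∉ φ.allVars) : x ∉ φ.free := by
  induction φ <;> simp_all [free, allVars, Term.mem_varFinset]

theorem Term.subst_of_notMem_vars {x : ℕ} {u t : Term} (h : x ∉ t.vars) :
    Term.subst x u t = t := by
  induction t with
  | var y =>
    simp only [vars, Set.mem_singleton_iff] at h
    simp [subst, Ne.symm h]
  | _ => simp_all [subst, vars]

theorem Formula.subst_of_notMem_free {Op : Type} {x : ℕ} {u : Term} {φ : Formula Op}
    (h : x ∉ φ.free) : φ.subst x u = φ := by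
  induction φ with
  | all y φ ih =>
    by_cases hyx : y = x
    · simp [subst, hyx]
    · have hx : x ∉ φ.free := fun hx => h ⟨hx, Ne.symm hyx⟩
      simp [subst, hyx, ih hx]
  | _ => simp_all [subst, free, Term.subst_of_notMem_vars]

theorem Formula.substitutable_var_of_notMem_allVars {Op : Type} {x z : ℕ} {φ : Formula Op}
    (h : z ∉ φ.allVars) : φ.Substitutable x (.var z) := by
  induction φ with
  | all y φ ih =>
    simp only [allVars, Finset.mem_insert, not_or] at h
    exact Or.inr (Or.inr ⟨Ne.symm h.1, ih h.2⟩)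
  | _ => simp_all [Substitutable, allVars]

theorem Term.mem_vars_subst_var {x z u : ℕ} (t : Term) :
    u ∈ (Term.subst x (.var z) t).vars ↔ (u ∈ t.vars ∧ u ≠ x) ∨ (u = z ∧ x ∈ t.vars) := by
  induction t with
  | var v =>
    by_cases hvx : v = x
    · subst hvx
      simp [subst, vars]
    · simp only [subst, hvx, if_false, vars, Set.mem_singleton_iff]
      grind
  | zero => simp [subst, vars]
  | succ t ih => exact ih
  | add t₁ t₂ ih₁ ih₂ | mul t₁ t₂ ih₁ ih₂ =>
    simp only [subst, vars, Set.mem_union, ih₁, ih₂]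
    clear ih₁ ih₂
    tauto

theorem Formula.mem_free_subst_var {Op : Type} {x z u : ℕ} {φ : Formula Op}
    (hz : z ∉ φ.allVars) :
    u ∈ (φ.subst x (.var z)).free ↔ (u ∈ φ.free ∧ u ≠ x) ∨ (u = z ∧ x ∈ φ.free) := by
  induction φ with
  | eq t₁ t₂ =>
    simp only [subst, free, Set.mem_union, Term.mem_vars_subst_var]
    clear hz
    tauto
  | imp φ₁ φ₂ ih₁ ih₂ =>
    simp only [allVars, Finset.mem_union, not_or] at hz
    simp only [subst, free, Set.mem_union, ih₁ hz.1, ih₂ hz.2]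
    clear ih₁ ih₂ hz
    tauto
  | not φ ih => exact ih hz
  | all w φ ih =>
    simp only [allVars, Finset.mem_insert, not_or] at hz
    by_cases hwx : w = x
    · subst hwx
      simp only [subst, if_true, free, Set.mem_sdiff, Set.mem_singleton_iff]
      tauto
    · simp only [subst, hwx, if_false, free, Set.mem_sdiff, Set.mem_singleton_iff, ih hz.2]
      constructor
      · rintro ⟨h | h, hu⟩
        · exact Or.inl ⟨⟨h.1, hu⟩, h.2⟩
        · exact Or.inr ⟨h.1, h.2, Ne.symm hwx⟩
      · rintro (⟨⟨h₁, h₂⟩, h₃⟩ | ⟨rfl, h₁, h₂⟩)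
        · exact ⟨Or.inl ⟨h₁, h₃⟩, h₂⟩
        · exact ⟨Or.inr ⟨rfl, h₁⟩, hz.1⟩
  | op K φ ih => exact ih hz

/-! ### Alphabetic variants -/

def pairVars : List (ℕ × ℕ) → Finset ℕ
  | [] => ∅
  | (a, b) :: ρ => insert a (insert b (pairVars ρ))

theorem varMatch_self {z : ℕ} : ∀ {ρ : List (ℕ × ℕ)}, z ∉ pairVars ρ → varMatch ρ z z
  | [], _ => rfl
  | (a, b) :: ρ, hz => by
    simp only [pairVars, Finset.mem_insert, not_or] at hz
    exact Or.inr ⟨hz.1, hz.2.1, varMatch_self hz.2.2⟩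

theorem eq_of_varMatch_left {z : ℕ} :
    ∀ {ρ : List (ℕ × ℕ)} {v : ℕ}, z ∉ pairVars ρ → varMatch ρ z v → v = z
  | [], _, _, h => h.symm
  | (a, b) :: ρ, v, hz, h => by
    simp only [pairVars, Finset.mem_insert, not_or] at hz
    rcases h with ⟨h, -⟩ | ⟨-, -, h⟩
    · exact absurd h hz.1
    · exact eq_of_varMatch_left hz.2.2 h

theorem eq_of_varMatch_right {z : ℕ} :
    ∀ {ρ : List (ℕ × ℕ)} {u : ℕ}, z ∉ pairVars ρ → varMatch ρ u z → u = z
  | [], _, _, h => h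
  | (a, b) :: ρ, u, hz, h => by
    simp only [pairVars, Finset.mem_insert, not_or] at hz
    rcases h with ⟨-, h⟩ | ⟨-, -, h⟩
    · exact absurd h hz.2.1
    · exact eq_of_varMatch_right hz.2.2 h

theorem varMatch_swap : ∀ {ρ : List (ℕ × ℕ)} {u v : ℕ},
    varMatch ρ u v → varMatch (ρ.map Prod.swap) v u
  | [], _, _, h => h.symm
  | (a, b) :: ρ, u, v, h => by
    rcases h with ⟨rfl, rfl⟩ | ⟨h₁, h₂, h⟩
    · exact Or.inl ⟨rfl, rfl⟩
    · exact Or.inr ⟨h₂, h₁, varMatch_swap h⟩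

theorem Term.alpha_swap {ρ : List (ℕ × ℕ)} {a b : Term} (h : a.alpha ρ b) :
    b.alpha (ρ.map Prod.swap) a := by
  induction a generalizing b <;> cases b <;> simp_all [alpha, varMatch_swap]

theorem Formula.alpha_swap {Op : Type} {ρ : List (ℕ × ℕ)} {φ ψ : Formula Op}
    (h : φ.alpha ρ ψ) : ψ.alpha (ρ.map Prod.swap) φ := by
  induction φ generalizing ψ ρ with
  | all x φ ih =>
    cases ψ <;> simp only [alpha] at h ⊢
    exact ih h
  | _ => cases ψ <;> simp_all [alpha, Term.alpha_swap]

theorem Term.exists_varMatch_of_mem_vars {ρ : List (ℕ × ℕ)} {a b : Term} (h : a.alpha ρ b)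
    {u : ℕ} (hu : u ∈ a.vars) : ∃ v ∈ b.vars, varMatch ρ u v := by
  induction a generalizing b with
  | var x =>
    cases b <;> simp only [alpha] at h
    case var y => exact ⟨y, rfl, (Set.mem_singleton_iff.1 hu) ▸ h⟩
  | zero => simp [vars] at hu
  | succ t ih =>
    cases b <;> simp only [alpha] at h
    case succ t' => exact ih (b := t') h hu
  | add t₁ t₂ ih₁ ih₂ | mul t₁ t₂ ih₁ ih₂ =>
    cases b <;> simp only [alpha] at h
    all_goals
      rcases hu with hu | hu
      · obtain ⟨v, hv, hm⟩ := ih₁ h.1 hu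
        exact ⟨v, Or.inl hv, hm⟩
      · obtain ⟨v, hv, hm⟩ := ih₂ h.2 hu
        exact ⟨v, Or.inr hv, hm⟩

theorem Formula.exists_varMatch_of_mem_free {Op : Type} {ρ : List (ℕ × ℕ)} {φ ψ : Formula Op}
    (h : φ.alpha ρ ψ) {u : ℕ} (hu : u ∈ φ.free) : ∃ v ∈ ψ.free, varMatch ρ u v := by
  induction φ generalizing ψ ρ with
  | eq t₁ t₂ =>
    cases ψ <;> simp only [alpha] at h
    case eq u₁ u₂ =>
      rcases hu with hu | hu
      · obtain ⟨v, hv, hm⟩ := Term.exists_varMatch_of_mem_vars h.1 hu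
        exact ⟨v, Or.inl hv, hm⟩
      · obtain ⟨v, hv, hm⟩ := Term.exists_varMatch_of_mem_vars h.2 hu
        exact ⟨v, Or.inr hv, hm⟩
  | imp φ₁ φ₂ ih₁ ih₂ =>
    cases ψ <;> simp only [alpha] at h
    case imp ψ₁ ψ₂ =>
      rcases hu with hu | hu
      · obtain ⟨v, hv, hm⟩ := ih₁ h.1 hu
        exact ⟨v, Or.inl hv, hm⟩
      · obtain ⟨v, hv, hm⟩ := ih₂ h.2 hu
        exact ⟨v, Or.inr hv, hm⟩
  | not φ ih =>
    cases ψ <;> simp only [alpha] at h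
    case not ψ₀ => exact ih (ψ := ψ₀) h hu
  | all x φ ih =>
    cases ψ <;> simp only [alpha] at h
    case all y ψ₀ =>
      obtain ⟨v, hv, ⟨hux, -⟩ | ⟨hux, hvy, hm⟩⟩ := ih h hu.1
      · exact absurd hux hu.2
      · exact ⟨v, ⟨hv, hvy⟩, hm⟩
  | op K φ ih =>
    cases ψ <;> simp only [alpha] at h
    case op K' ψ₀ => exact ih (ψ := ψ₀) h.2 hu

theorem Formula.AlphaVariant.free_eq {Op : Type} {φ ψ : Formula Op} (h : φ.AlphaVariant ψ) :
    φ.free = ψ.free := by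
  have h' : ψ.AlphaVariant φ := Formula.alpha_swap h
  ext u
  constructor
  · intro hu
    obtain ⟨v, hv, rfl⟩ := Formula.exists_varMatch_of_mem_free h hu
    exact hv
  · intro hu
    obtain ⟨v, hv, rfl⟩ := Formula.exists_varMatch_of_mem_free h' hu
    exact hv

/-- Renaming the matched pair `(x, y)` to a common fresh variable `z`: an occurrence of `x`
(resp. `y`) is renamed unless it is captured by one of the binders recorded in `ρ₁`. -/
theorem varMatch_append_rename {x y z : ℕ} {ρ₂ : List (ℕ × ℕ)} (hz₂ : z ∉ pairVars ρ₂) :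
    ∀ {ρ₁ : List (ℕ × ℕ)} {u v : ℕ}, z ∉ pairVars ρ₁ → varMatch (ρ₁ ++ (x, y) :: ρ₂) u v →
      varMatch (ρ₁ ++ ρ₂)
        (if u = x ∧ x ∉ ρ₁.map Prod.fst then z else u)
        (if v = y ∧ y ∉ ρ₁.map Prod.snd then z else v)
  | [], u, v, _, h => by
    rcases h with ⟨rfl, rfl⟩ | ⟨hux, hvy, h⟩
    · simpa using varMatch_self hz₂
    · simpa [hux, hvy] using h
  | (a, b) :: ρ₁, u, v, hz₁, h => by
    simp only [pairVars, Finset.mem_insert, not_or] at hz₁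
    rcases h with ⟨rfl, rfl⟩ | ⟨hua, hvb, h⟩
    · simp only [List.cons_append, List.map_cons]
      rw [if_neg fun h => h.2 (h.1 ▸ List.mem_cons_self),
        if_neg fun h => h.2 (h.1 ▸ List.mem_cons_self)]
      exact Or.inl ⟨rfl, rfl⟩
    · have ih := varMatch_append_rename (x := x) (y := y) hz₂ hz₁.2.2 h
      simp only [List.cons_append, List.map_cons, List.mem_cons, not_or, varMatch]
      refine Or.inr ⟨?_, ?_, ?_⟩ <;> split_ifs at ih ⊢ <;> simp_all

theorem Term.alpha_append_rename {x y z : ℕ} {ρ₁ ρ₂ : List (ℕ × ℕ)} (hz₁ : z ∉ pairVars ρ₁)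
    (hz₂ : z ∉ pairVars ρ₂) {a b : Term} (h : a.alpha (ρ₁ ++ (x, y) :: ρ₂) b) :
    (if x ∈ ρ₁.map Prod.fst then a else Term.subst x (.var z) a).alpha (ρ₁ ++ ρ₂)
      (if y ∈ ρ₁.map Prod.snd then b else Term.subst y (.var z) b) := by
  induction a generalizing b with
  | var u =>
    cases b <;> simp only [alpha] at h
    case var v =>
      have key := varMatch_append_rename hz₂ hz₁ h
      split_ifs at key ⊢ <;> simp_all [subst, alpha]
  | _ =>
    cases b <;> simp only [alpha] at h
    all_goals split_ifs at * <;> simp_all [subst, alpha]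

theorem Formula.ite_subst_all {Op : Type} (c : Prop) [Decidable c] (x w : ℕ) (u : Term)
    (φ : Formula Op) :
    (if c then .all w φ else (Formula.all w φ).subst x u) =
      .all w (if x = w ∨ c then φ else φ.subst x u) := by
  by_cases hc : c
  · simp [hc]
  · by_cases hxw : x = w
    · simp [hc, hxw, subst]
    · simp [hc, hxw, subst, Ne.symm hxw]

theorem Formula.alpha_append_rename {Op : Type} {x y z : ℕ} {ρ₁ ρ₂ : List (ℕ × ℕ)}
    (hz₁ : z ∉ pairVars ρ₁) (hz₂ : z ∉ pairVars ρ₂) {φ ψ : Formula Op}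
    (hzφ : z ∉ φ.allVars) (hzψ : z ∉ ψ.allVars) (h : φ.alpha (ρ₁ ++ (x, y) :: ρ₂) ψ) :
    (if x ∈ ρ₁.map Prod.fst then φ else φ.subst x (.var z)).alpha (ρ₁ ++ ρ₂)
      (if y ∈ ρ₁.map Prod.snd then ψ else ψ.subst y (.var z)) := by
  induction φ generalizing ψ ρ₁ with
  | eq t₁ t₂ =>
    cases ψ <;> simp only [alpha] at h
    case eq u₁ u₂ =>
      have h₁ := Term.alpha_append_rename hz₁ hz₂ h.1
      have h₂ := Term.alpha_append_rename hz₁ hz₂ h.2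
      split_ifs at h₁ h₂ ⊢ <;> exact ⟨h₁, h₂⟩
  | imp φ₁ φ₂ ih₁ ih₂ =>
    cases ψ <;> simp only [alpha] at h
    case imp ψ₁ ψ₂ =>
      simp only [allVars, Finset.mem_union, not_or] at hzφ hzψ
      have h₁ := ih₁ hz₁ hzφ.1 hzψ.1 h.1
      have h₂ := ih₂ hz₁ hzφ.2 hzψ.2 h.2
      split_ifs at h₁ h₂ ⊢ <;> exact ⟨h₁, h₂⟩
  | not φ ih =>
    cases ψ <;> simp only [alpha] at h
    case not ψ₀ =>
      have h₁ := ih (ψ := ψ₀) hz₁ hzφ hzψ h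
      split_ifs at h₁ ⊢ <;> exact h₁
  | all w φ ih =>
    cases ψ <;> simp only [alpha] at h
    case all w' ψ₀ =>
      simp only [allVars, Finset.mem_insert, not_or] at hzφ hzψ
      have hz₁' : z ∉ pairVars ((w, w') :: ρ₁) := by simp [pairVars, hzφ.1, hzψ.1, hz₁]
      have h₁ := ih hz₁' hzφ.2 hzψ.2 h
      simp only [List.map_cons, List.mem_cons] at h₁
      rw [ite_subst_all, ite_subst_all]
      exact h₁
  | op K φ ih =>
    cases ψ <;> simp only [alpha] at h
    case op K' ψ₀ =>
      have h₁ := ih (ψ := ψ₀) hz₁ hzφ hzψ h.2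
      split_ifs at h₁ ⊢ <;> exact ⟨h.1, h₁⟩

theorem Term.eval_eq_of_alpha {Op : Type} {N : PreStruc Op} {ρ : List (ℕ × ℕ)}
    {σ τ : ℕ → N.U} {a b : Term} (h : a.alpha ρ b)
    (hστ : ∀ u v, varMatch ρ u v → u ∈ a.vars → v ∈ b.vars → σ u = τ v) :
    a.eval N σ = b.eval N τ := by
  induction a generalizing b with
  | var x =>
    cases b <;> simp only [alpha] at h
    case var y => exact hστ x y h rfl rfl
  | zero =>
    cases b <;> simp only [alpha] at h
    rfl
  | succ a ih =>
    cases b <;> simp only [alpha] at h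
    case succ b => exact congrArg N.succ (ih h hστ)
  | add a₁ a₂ ih₁ ih₂ | mul a₁ a₂ ih₁ ih₂ =>
    cases b <;> simp only [alpha] at h
    all_goals
      rw [eval, eval, ih₁ h.1 fun u v hm hu hv => hστ u v hm (Or.inl hu) (Or.inl hv),
        ih₂ h.2 fun u v hm hu hv => hστ u v hm (Or.inr hu) (Or.inr hv)]

namespace IsStruc

variable {Op : Type} {N : PreStruc Op}

theorem opSat_subst_fresh (hN : IsStruc N) (K : Op) {φ : Formula Op} {x z : ℕ}
    (hz : z ∉ φ.allVars) (s : ℕ → N.U) :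
    N.opSat K (φ.subst x (.var z)) (Function.update s z (s x)) ↔ N.opSat K φ s := by
  refine (hN.2.2 K φ x z _ (Formula.substitutable_var_of_notMem_allVars hz)).trans
    (hN.1 K φ _ s fun u hu => ?_)
  have huz : u ≠ z := fun h => Formula.notMem_free_of_notMem_allVars hz (h ▸ hu)
  by_cases hux : u = x
  · subst hux
    simp
  · simp [Function.update_of_ne hux, Function.update_of_ne huz]

/-- Each pair `(x, y)` of `ρ` is replaced by a common fresh variable, which the substitution axiom
of the base logic allows. -/
theorem opSat_iff_of_alpha (hN : IsStruc N) (K : Op) :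
    ∀ {ρ : List (ℕ × ℕ)} {φ ψ : Formula Op} {s t : ℕ → N.U}, φ.alpha ρ ψ →
      (∀ u v, varMatch ρ u v → u ∈ φ.free → v ∈ ψ.free → s u = t v) →
      (N.opSat K φ s ↔ N.opSat K ψ t)
  | [], φ, ψ, s, t, h, hst => by
    have hfree := Formula.AlphaVariant.free_eq h
    exact (hN.1 K φ s t fun u hu => hst u u rfl hu (hfree ▸ hu)).trans (hN.2.1 K φ ψ t h)
  | (x, y) :: ρ, φ, ψ, s, t, h, hst => by
    obtain ⟨z, hz⟩ := Infinite.exists_notMem_finset (φ.allVars ∪ ψ.allVars ∪ pairVars ρ)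
    simp only [Finset.mem_union, not_or] at hz
    obtain ⟨⟨hzφ, hzψ⟩, hzρ⟩ := hz
    have h' : (φ.subst x (.var z)).alpha ρ (ψ.subst y (.var z)) := by
      simpa using Formula.alpha_append_rename (ρ₁ := []) (by simp [pairVars]) hzρ hzφ hzψ h
    rw [← hN.opSat_subst_fresh K hzφ s, ← hN.opSat_subst_fresh K hzψ t]
    refine opSat_iff_of_alpha hN K h' fun u v hm hu hv => ?_
    rw [Formula.mem_free_subst_var hzφ] at hu
    rw [Formula.mem_free_subst_var hzψ] at hv
    have hzφ' := Formula.notMem_free_of_notMem_allVars hzφ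
    have hzψ' := Formula.notMem_free_of_notMem_allVars hzψ
    by_cases huz : u = z
    · have hvz : v = z := eq_of_varMatch_left hzρ (huz ▸ hm)
      have hx : x ∈ φ.free := (hu.resolve_left fun h => hzφ' (huz ▸ h.1)).2
      have hy : y ∈ ψ.free := (hv.resolve_left fun h => hzψ' (hvz ▸ h.1)).2
      rw [huz, hvz, Function.update_self, Function.update_self]
      exact hst x y (Or.inl ⟨rfl, rfl⟩) hx hy
    · have hvz : v ≠ z := fun hvz => huz (eq_of_varMatch_right hzρ (hvz ▸ hm))
      obtain ⟨hu, hux⟩ := hu.resolve_right fun h => huz h.1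
      obtain ⟨hv, hvy⟩ := hv.resolve_right fun h => hvz h.1
      rw [Function.update_of_ne huz, Function.update_of_ne hvz]
      exact hst u v (Or.inr ⟨hux, hvy, hm⟩) hu hv

theorem sat_iff_of_alpha (hN : IsStruc N) {ρ : List (ℕ × ℕ)} {σ τ : ℕ → N.U}
    {φ ψ : Formula Op} (h : φ.alpha ρ ψ)
    (hστ : ∀ u v, varMatch ρ u v → u ∈ φ.free → v ∈ ψ.free → σ u = τ v) :
    Sat N φ σ ↔ Sat N ψ τ := by
  induction φ generalizing ψ ρ σ τ with
  | eq t₁ t₂ =>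
    cases ψ <;> simp only [Formula.alpha] at h
    case eq u₁ u₂ =>
      simp only [Sat]
      rw [Term.eval_eq_of_alpha h.1 fun u v hm hu hv => hστ u v hm (Or.inl hu) (Or.inl hv),
        Term.eval_eq_of_alpha h.2 fun u v hm hu hv => hστ u v hm (Or.inr hu) (Or.inr hv)]
  | imp φ₁ φ₂ ih₁ ih₂ =>
    cases ψ <;> simp only [Formula.alpha] at h
    case imp ψ₁ ψ₂ =>
      exact imp_congr (ih₁ h.1 fun u v hm hu hv => hστ u v hm (Or.inl hu) (Or.inl hv))
        (ih₂ h.2 fun u v hm hu hv => hστ u v hm (Or.inr hu) (Or.inr hv))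
  | not φ ih =>
    cases ψ <;> simp only [Formula.alpha] at h
    case not ψ => exact not_congr (ih h hστ)
  | all x φ ih =>
    cases ψ <;> simp only [Formula.alpha] at h
    case all y ψ =>
      refine forall_congr' fun a => ih h ?_
      rintro u v (⟨rfl, rfl⟩ | ⟨hux, hvy, hm⟩) hu hv
      · simp
      · rw [Function.update_of_ne hux, Function.update_of_ne hvy]
        exact hστ u v hm ⟨hu, hux⟩ ⟨hv, hvy⟩
  | op K φ =>
    cases ψ <;> simp only [Formula.alpha] at h
    case op K' ψ =>
      obtain ⟨rfl, h⟩ := h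
      exact hN.opSat_iff_of_alpha K h hστ

end IsStruc

theorem Models.of_alphaVariant {Op : Type} {T : Set (Formula Op)} {χ χ' : Formula Op}
    (h : χ.AlphaVariant χ') (hχ : Models T χ) : Models T χ' :=
  fun N hN hT s => (hN.sat_iff_of_alpha h fun _ _ huv _ _ => congrArg s huv).1 (hχ N hN hT s)

/-! ### Substituting numerals -/

theorem Term.numSub_numeral (s : ℕ → ℕ) (B : List ℕ) (n : ℕ) :
    (numeral n).numSub s B = numeral n := by
  induction n <;> simp_all [numeral, numSub]

theorem Term.alpha_numeral_self (ρ : List (ℕ × ℕ)) (n : ℕ) : (numeral n).alpha ρ (numeral n) := by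
  induction n <;> simp_all [numeral, alpha]

theorem Term.numSub_congr {s t : ℕ → ℕ} {B : List ℕ} {a : Term}
    (h : ∀ x ∈ a.vars, x ∉ B → s x = t x) : a.numSub s B = a.numSub t B := by
  induction a <;> simp_all [numSub, vars]

theorem Formula.numSub_congr {Op : Type} {s t : ℕ → ℕ} {B : List ℕ} {φ : Formula Op}
    (h : ∀ x ∈ φ.free, x ∉ B → s x = t x) : φ.numSub s B = φ.numSub t B := by
  induction φ generalizing B with
  | eq t₁ t₂ =>
    simp only [numSub]
    rw [Term.numSub_congr fun x hx => h x (Or.inl hx),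
      Term.numSub_congr fun x hx => h x (Or.inr hx)]
  | imp φ₁ φ₂ ih₁ ih₂ =>
    simp only [numSub]
    rw [ih₁ fun x hx => h x (Or.inl hx), ih₂ fun x hx => h x (Or.inr hx)]
  | not φ ih => simp only [numSub]; rw [ih h]
  | all y φ ih =>
    simp only [numSub]
    rw [ih fun x hx hB => h x ⟨hx, fun hxy => hB (hxy ▸ List.mem_cons_self)⟩
      fun hxB => hB (List.mem_cons_of_mem _ hxB)]
  | op K φ ih => simp only [numSub]; rw [ih h]

theorem Term.numSub_numSub (s₀ s : ℕ → ℕ) (B C : List ℕ) (a : Term) :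
    (a.numSub s₀ (C ++ B)).numSub s C = a.numSub (fun x => if x ∈ B then s x else s₀ x) C := by
  induction a with
  | var x =>
    by_cases hC : x ∈ C
    · simp [numSub, hC]
    · by_cases hB : x ∈ B <;> simp [numSub, hC, hB, numSub_numeral]
  | _ => simp_all [numSub]

theorem Formula.numSub_numSub {Op : Type} (s₀ s : ℕ → ℕ) (B C : List ℕ) (φ : Formula Op) :
    (φ.numSub s₀ (C ++ B)).numSub s C = φ.numSub (fun x => if x ∈ B then s x else s₀ x) C := by
  induction φ generalizing C with
  | all x φ ih => simpa [numSub] using ih (x :: C)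
  | _ => simp_all [numSub, Term.numSub_numSub]

theorem Term.numSub_subst {x y : ℕ} (s : ℕ → ℕ) {B : List ℕ} (hx : x ∉ B) (hy : y ∉ B)
    (a : Term) : (Term.subst x (.var y) a).numSub s B = a.numSub (Function.update s x (s y)) B := by
  induction a with
  | var v =>
    by_cases hvx : v = x
    · subst hvx
      simp [subst, numSub, hx, hy]
    · simp [subst, numSub, hvx]
  | _ => simp_all [subst, numSub]

theorem Formula.numSub_subst {Op : Type} {x y : ℕ} (s : ℕ → ℕ) {B : List ℕ} {φ : Formula Op}
    (hφ : φ.Substitutable x (.var y)) (hx : x ∉ B) (hy : y ∉ B) :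
    (φ.subst x (.var y)).numSub s B = φ.numSub (Function.update s x (s y)) B := by
  induction φ generalizing B with
  | all z φ ih =>
    by_cases hzx : z = x
    · subst hzx
      simp only [subst, if_true, numSub]
      exact congrArg _ <| numSub_congr fun v _ hv =>
        (Function.update_of_ne (fun h : v = z => hv (h ▸ List.mem_cons_self)) _ _).symm
    · simp only [subst, hzx, if_false, numSub]
      rcases hφ with h | h | ⟨hzy, hφ⟩
      · exact absurd h.symm hzx
      · rw [subst_of_notMem_free h]
        exact congrArg _ <| numSub_congr fun v hv _ =>
          (Function.update_of_ne (fun h' : v = x => h (h' ▸ hv)) _ _).symm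
      · have hzy : z ≠ y := fun h => hzy h
        rw [ih hφ (by simp [hx, Ne.symm hzx]) (by simp [hy, Ne.symm hzy])]
  | _ => simp_all [subst, numSub, Substitutable, Term.numSub_subst s hx hy]

theorem mem_map_or_eq_of_varMatch :
    ∀ {ρ : List (ℕ × ℕ)} {u v : ℕ}, varMatch ρ u v →
      (u ∈ ρ.map Prod.fst ∧ v ∈ ρ.map Prod.snd) ∨
        (u = v ∧ u ∉ ρ.map Prod.fst ∧ v ∉ ρ.map Prod.snd)
  | [], _, _, h => Or.inr ⟨h, List.not_mem_nil, List.not_mem_nil⟩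
  | (a, b) :: ρ, u, v, h => by
    rcases h with ⟨rfl, rfl⟩ | ⟨hua, hvb, h⟩
    · simp
    · rcases mem_map_or_eq_of_varMatch h with ⟨hu, hv⟩ | ⟨rfl, hu, hv⟩
      · simp [hu, hv]
      · simp [hu, hv, hua, hvb]

theorem Term.numSub_alpha (s : ℕ → ℕ) {ρ : List (ℕ × ℕ)} {a b : Term} (h : a.alpha ρ b) :
    (a.numSub s (ρ.map Prod.fst)).alpha ρ (b.numSub s (ρ.map Prod.snd)) := by
  induction a generalizing b with
  | var u =>
    cases b <;> simp only [alpha] at h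
    case var v =>
      rcases mem_map_or_eq_of_varMatch h with ⟨hu, hv⟩ | ⟨rfl, hu, hv⟩
      · simpa [numSub, hu, hv, alpha] using h
      · simpa [numSub, hu, hv] using alpha_numeral_self ρ (s u)
  | _ => cases b <;> simp_all [alpha, numSub]

theorem Formula.numSub_alpha {Op : Type} (s : ℕ → ℕ) {ρ : List (ℕ × ℕ)} {φ ψ : Formula Op}
    (h : φ.alpha ρ ψ) :
    (φ.numSub s (ρ.map Prod.fst)).alpha ρ (ψ.numSub s (ρ.map Prod.snd)) := by
  induction φ generalizing ψ ρ with
  | all x φ ih =>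
    cases ψ <;> simp only [alpha] at h
    case all y ψ => simpa [numSub, alpha] using ih h
  | _ => cases ψ <;> simp_all [alpha, numSub, Term.numSub_alpha]

theorem Formula.on_numSub (s : ℕ → ℕ) (B : List ℕ) (φ : LOO) : (φ.numSub s B).On = φ.On := by
  induction φ generalizing B <;> simp_all [numSub, On]

theorem Formula.on_subst (x : ℕ) (u : Term) (φ : LOO) : (φ.subst x u).On = φ.On := by
  induction φ with
  | all y φ ih => by_cases hyx : y = x <;> simp [subst, hyx, On, ih]
  | _ => simp_all [subst, On]

theorem Formula.on_finite (φ : LOO) : φ.On.Finite := by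
  induction φ with
  | eq t₁ t₂ => exact Set.finite_empty
  | imp φ₁ φ₂ ih₁ ih₂ => exact ih₁.union ih₂
  | not φ ih | all _ φ ih => exact ih
  | op K φ ih => exact ih.insert K

/-! ### Stratifiers -/

theorem leastIn_mem {A : Set Ord2} (h : A.Nonempty) : leastIn A ∈ A := by
  obtain ⟨p, hp⟩ := h
  obtain ⟨b, hb⟩ := Nat.sInf_mem (s := {a : ℕ | ∃ b : ℕ, toLex (a, b) ∈ A})
    ⟨(ofLex p).1, (ofLex p).2, hp⟩
  exact Nat.sInf_mem (s := {c | toLex (sInf {a : ℕ | ∃ b : ℕ, toLex (a, b) ∈ A}, c) ∈ A}) ⟨b, hb⟩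

theorem leastIn_le {A : Set Ord2} {p : Ord2} (h : p ∈ A) : leastIn A ≤ p := by
  obtain ⟨⟨a, b⟩, rfl⟩ : ∃ q : ℕ × ℕ, toLex q = p := ⟨ofLex p, rfl⟩
  have ha : sInf {a : ℕ | ∃ b : ℕ, toLex (a, b) ∈ A} ≤ a := Nat.sInf_le ⟨b, h⟩
  rcases ha.lt_or_eq with hlt | hEq
  · exact Prod.Lex.toLex_le_toLex.2 (Or.inl hlt)
  · refine Prod.Lex.toLex_le_toLex.2 (Or.inr ⟨hEq, Nat.sInf_le ?_⟩)
    show toLex (_, b) ∈ A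
    rw [hEq]
    exact h

theorem leastIn_lt_of_subset {A B : Set Ord2} (hB : B.Nonempty) (hBA : B ⊆ A)
    (hne : leastIn A ∉ B) : leastIn A < leastIn B :=
  lt_of_le_of_ne (leastIn_le (hBA (leastIn_mem hB))) fun h => hne (h ▸ leastIn_mem hB)

section Stratify

variable (X : Set Ord2)

theorem free_stratify (φ : LEA) : (stratify X φ).free = φ.free := by
  induction φ <;> simp_all [stratify, Formula.free]

theorem stratify_numSub (s : ℕ → ℕ) (B : List ℕ) (φ : LEA) :
    stratify X (φ.numSub s B) = (stratify X φ).numSub s B := by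
  induction φ generalizing B with
  | op K φ ih => simp only [Formula.numSub, stratify, ih, Formula.on_numSub]
  | _ => simp_all [Formula.numSub, stratify]

theorem stratify_assignSub (s : ℕ → ℕ) (φ : LEA) :
    stratify X (assignSub s φ) = assignSub s (stratify X φ) :=
  stratify_numSub X s [] φ

theorem stratify_subst (x : ℕ) (u : Term) (φ : LEA) :
    stratify X (φ.subst x u) = (stratify X φ).subst x u := by
  induction φ with
  | all y φ ih => by_cases hyx : y = x <;> simp [Formula.subst, hyx, stratify, ih]
  | op K φ ih => simp only [Formula.subst, stratify, ih, Formula.on_subst]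
  | _ => simp_all [Formula.subst, stratify]

theorem stratify_alls (φ : LEA) (l : List ℕ) :
    stratify X (Formula.alls l φ) = Formula.alls l (stratify X φ) := by
  induction l <;> simp_all [Formula.alls, stratify]

theorem substitutable_stratify {x : ℕ} {u : Term} {φ : LEA} (h : φ.Substitutable x u) :
    (stratify X φ).Substitutable x u := by
  induction φ with
  | all y φ ih =>
    rcases h with h | h | ⟨hy, h⟩
    · exact Or.inl h
    · exact Or.inr (Or.inl ((free_stratify X φ).symm ▸ h))
    · exact Or.inr (Or.inr ⟨hy, ih h⟩)
  | _ => simp_all [stratify, Formula.Substitutable]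

theorem alpha_stratify {ρ : List (ℕ × ℕ)} {φ ψ : LEA} (h : φ.alpha ρ ψ) :
    (stratify X φ).alpha ρ (stratify X ψ) ∧ (stratify X φ).On = (stratify X ψ).On := by
  induction φ generalizing ψ ρ with
  | eq t₁ t₂ =>
    cases ψ <;> simp only [Formula.alpha] at h
    case eq u₁ u₂ => exact ⟨h, rfl⟩
  | imp φ₁ φ₂ ih₁ ih₂ =>
    cases ψ <;> simp only [Formula.alpha] at h
    case imp ψ₁ ψ₂ =>
      obtain ⟨hal₁, hOn₁⟩ := ih₁ h.1
      obtain ⟨hal₂, hOn₂⟩ := ih₂ h.2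
      exact ⟨⟨hal₁, hal₂⟩, congrArg₂ (· ∪ ·) hOn₁ hOn₂⟩
  | not φ ih =>
    cases ψ <;> simp only [Formula.alpha] at h
    case not ψ => exact ih h
  | all x φ ih =>
    cases ψ <;> simp only [Formula.alpha] at h
    case all y ψ => exact ih h
  | op K φ ih =>
    cases ψ <;> simp only [Formula.alpha] at h
    case op K' ψ =>
      obtain ⟨hal, hOn⟩ := ih h.2
      simp only [stratify, Formula.alpha, Formula.On, hOn]
      exact ⟨⟨trivial, hal⟩, trivial⟩

theorem lt_leastIn_of_mem_on_stratify {S : Set Ord2} (hne : (X \ S).Nonempty) {φ : LEA}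
    (hS : (stratify X φ).On ⊆ S) {β : Ord2} (hβ : β ∈ (stratify X φ).On) :
    β < leastIn (X \ S) := by
  induction φ with
  | eq t₁ t₂ => exact absurd hβ id
  | imp φ₁ φ₂ ih₁ ih₂ =>
    rcases hβ with hβ | hβ
    · exact ih₁ (fun γ hγ => hS (Or.inl hγ)) hβ
    · exact ih₂ (fun γ hγ => hS (Or.inr hγ)) hβ
  | not φ ih | all _ φ ih => exact ih hS hβ
  | op K φ ih =>
    rcases hβ with rfl | hβ
    · exact leastIn_lt_of_subset hne
        (Set.sdiff_subset_sdiff_right fun γ hγ => hS (Set.mem_insert_of_mem _ hγ))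
        fun h => h.2 (hS (Set.mem_insert _ _))
    · exact ih (fun γ hγ => hS (Set.mem_insert_of_mem _ hγ)) hβ

end Stratify

/-! ### The structures `𝓜_T` and `𝓜⁺` -/

section MStruc

variable (T : Set LOO)

theorem eval_MStruc_numeral (s : ℕ → (MStruc T).U) (n : ℕ) :
    (numeral n).eval (MStruc T) s = n := by
  induction n <;> simp_all [numeral, Term.eval, MStruc]

theorem eval_MStruc_numSub (s₀ : ℕ → ℕ) (s : ℕ → (MStruc T).U) (B : List ℕ) (a : Term) :
    (a.numSub s₀ B).eval (MStruc T) s =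
      a.eval (MStruc T) (fun x => if x ∈ B then s x else s₀ x) := by
  induction a with
  | var x =>
    by_cases hx : x ∈ B
    · simp only [Term.numSub, Term.eval, if_pos hx]
      exact (if_pos hx).symm
    · simp only [Term.numSub, Term.eval, if_neg hx, eval_MStruc_numeral]
      exact (if_neg hx).symm
  | _ => simp_all [Term.numSub, Term.eval]

theorem sat_MStruc_numSub (s₀ : ℕ → ℕ) (s : ℕ → (MStruc T).U) (B : List ℕ) (ψ : LOO) :
    Sat (MStruc T) (ψ.numSub s₀ B) s ↔
      Sat (MStruc T) ψ (fun x => if x ∈ B then s x else s₀ x) := by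
  induction ψ generalizing B s with
  | eq t₁ t₂ => simp only [Formula.numSub, Sat, eval_MStruc_numSub]
  | imp φ₁ φ₂ ih₁ ih₂ => exact imp_congr (ih₁ s B) (ih₂ s B)
  | not φ ih => exact not_congr (ih s B)
  | all x φ ih =>
    refine forall_congr' fun a =>
      (ih _ (x :: B)).trans (iff_of_eq (congrArg _ (funext fun y => ?_)))
    by_cases hyx : y = x
    · simp [hyx]
    · simp [hyx]
  | op α φ ih =>
    exact iff_of_eq (congrArg (Models (cut T α)) (Formula.numSub_numSub s₀ s B [] φ))

theorem sat_MStruc_assignSub (s₀ : ℕ → ℕ) (s : ℕ → (MStruc T).U) (ψ : LOO) :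
    Sat (MStruc T) (assignSub s₀ ψ) s ↔ Sat (MStruc T) ψ s₀ := by
  have h := sat_MStruc_numSub T s₀ s [] ψ
  simp only [List.not_mem_nil] at h
  exact h

end MStruc

theorem Term.eval_upStruc (M : PreStruc Ord2) (f : LEA → LOO) (s : ℕ → M.U) (a : Term) :
    a.eval (upStruc M f) s = a.eval M s := by
  induction a <;> simp_all [eval, upStruc]

theorem sat_upStruc_stratify (M : PreStruc Ord2) (X : Set Ord2) (φ : LEA) (s : ℕ → M.U) :
    Sat (upStruc M (stratify X)) φ s ↔ Sat M (stratify X φ) s := by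
  induction φ generalizing s with
  | eq t₁ t₂ =>
    simp only [Sat, stratify, Term.eval_upStruc]
    exact Iff.rfl
  | imp φ₁ φ₂ ih₁ ih₂ => exact imp_congr (ih₁ s) (ih₂ s)
  | not φ ih => exact not_congr (ih s)
  | all x φ ih => exact forall_congr' fun a => ih _
  | op K φ => rfl

theorem opSat_upStruc_MStruc_stratify (T : Set LOO) (X : Set Ord2) (K : Unit) (φ : LEA)
    (s : ℕ → (upStruc (MStruc T) (stratify X)).U) :
    (upStruc (MStruc T) (stratify X)).opSat K φ s ↔
      Models (cut T (leastIn (X \ (stratify X φ).On))) (assignSub s (stratify X φ)) :=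
  Iff.rfl

theorem isStruc_upStruc_MStruc_stratify (T : Set LOO) (X : Set Ord2) :
    IsStruc (upStruc (MStruc T) (stratify X)) := by
  refine ⟨fun K φ s t hst => ?_, fun K φ ψ s h => ?_, fun K φ x y s h => ?_⟩
  · rw [opSat_upStruc_MStruc_stratify, opSat_upStruc_MStruc_stratify]
    exact iff_of_eq (congrArg _
      (Formula.numSub_congr fun v hv _ => hst v ((free_stratify X φ) ▸ hv)))
  · obtain ⟨hal, hOn⟩ := alpha_stratify X h
    have hal' : (assignSub s (stratify X φ)).AlphaVariant (assignSub s (stratify X ψ)) :=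
      Formula.numSub_alpha s hal
    rw [opSat_upStruc_MStruc_stratify, opSat_upStruc_MStruc_stratify, hOn]
    exact ⟨Models.of_alphaVariant hal', Models.of_alphaVariant (Formula.alpha_swap hal')⟩
  · rw [opSat_upStruc_MStruc_stratify, opSat_upStruc_MStruc_stratify, stratify_subst,
      Formula.on_subst]
    exact iff_of_eq (congrArg _
      (Formula.numSub_subst s (substitutable_stratify X h) List.not_mem_nil List.not_mem_nil))

theorem models_of_mem {Op : Type} {T : Set (Formula Op)} {φ : Formula Op} (h : φ ∈ T) :
    Models T φ :=
  fun _ _ hT => hT φ h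

theorem sat_alls {Op : Type} {M : PreStruc Op} {φ : Formula Op} (h : ∀ s, Sat M φ s) :
    ∀ (l : List ℕ) (s : ℕ → M.U), Sat M (Formula.alls l φ) s
  | [], s => h s
  | _ :: l, _ => fun _ => sat_alls h l _

theorem sat_MStruc_stratify_of_mem_assignedValidity (T : Set LOO) (X : Set Ord2) {χ : LEA}
    (hχ : χ ∈ AssignedValidity) (s : ℕ → (MStruc T).U) : Sat (MStruc T) (stratify X χ) s := by
  obtain ⟨φ, s₀, hφ, rfl⟩ := hχ
  rw [stratify_assignSub, sat_MStruc_assignSub]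
  exact (sat_upStruc_stratify (MStruc T) X φ s₀).1 (hφ _ (isStruc_upStruc_MStruc_stratify T X) s₀)

theorem sat_MStruc_oplus_stratify_KK {T : Set LEA} (hT : AssignedValidity ⊆ T) {X : Set Ord2}
    (hX : X.Infinite) {φ : LEA} (hφ : Valid φ) (s : ℕ → (MStruc (oplus T)).U) :
    Sat (MStruc (oplus T)) (stratify X (KK φ)) s := by
  refine models_of_mem ⟨⟨assignSub s φ, hT ⟨φ, s, hφ, rfl⟩, stratify X, ⟨X, hX, rfl⟩,
    (stratify_assignSub X s φ).symm⟩, fun β hβ => ?_⟩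
  exact lt_leastIn_of_mem_on_stratify X (hX.sdiff (Formula.on_finite _)).nonempty subset_rfl
    (Formula.on_numSub s [] _ ▸ hβ)

/-- `E₁ ∪ (Assigned Validity)` is upgeneric. -/
theorem E1_union_assignedValidity_upgeneric :
    Upgeneric (E1 ∪ AssignedValidity) := by
  rintro T - hT _ ⟨χ, hχ, f, ⟨X, hX, rfl⟩, rfl⟩ s
  rcases hχ with ⟨φ, hφ, -, l, rfl⟩ | hχ
  · rw [stratify_alls]
    exact sat_alls (sat_MStruc_oplus_stratify_KK (Set.subset_union_right.trans hT) hX hφ) l s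
  · exact sat_MStruc_stratify_of_mem_assignedValidity _ X hχ s

end FCT
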